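/- Let S be a countable commutative semigroup (not necessarily unital or cancellative), let H be a finite-dimensional complex Hilbert space, and let π : S → B(H) be a semigroup homomorphism (π(st) = π(s)π(t)) which is a frame representation. Then π is central: for any two frame vectors ξ and η of π there exists an invertible operator T on H with Tπ(s) = π(s)T for all s ∈ S and Tξ = η. -/
import Mathlib


noncomputable section

open scoped ENNReal

local notation "⟪" x ", " y "⟫" => @inner ℂ _ _ x y

/-- The Hilbert space `ℓ²(S)` of square-summable complex functions on `S`. -/
abbrev l2 (S : Type*) : Type _ := lp (fun _ : S => ℂ) 2

/-- The standard orthonormal basis vector `δ_t ∈ ℓ²(S)`. -/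
def sdelta {S : Type*} [DecidableEq S] (t : S) : l2 S := lp.single 2 t 1

/-- The family `(f s)_{s ∈ S}` is a frame for `H`. -/
def IsFrame {S H : Type*} [NormedAddCommGroup H] [InnerProductSpace ℂ H] (f : S → H) : Prop :=
  ∃ C₁ C₂ : ℝ, 0 < C₁ ∧ C₁ ≤ C₂ ∧ ∀ x : H,
    (C₁ * ‖x‖ ^ 2 ≤ ∑' s, ‖⟪x, f s⟫‖ ^ 2) ∧ (∑' s, ‖⟪x, f s⟫‖ ^ 2 ≤ C₂ * ‖x‖ ^ 2)

/-- The family `(f s)_{s ∈ S}` is a Bessel sequence in `H`. -/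
def IsBessel {S H : Type*} [NormedAddCommGroup H] [InnerProductSpace ℂ H] (f : S → H) : Prop :=
  ∃ C₂ : ℝ, 0 < C₂ ∧ ∀ x : H, ∑' s, ‖⟪x, f s⟫‖ ^ 2 ≤ C₂ * ‖x‖ ^ 2

/-- `π` is a representation of the monoid `S` on `H`: `π 1 = 1` and `π (s*t) = π s ∘ π t`. -/
def IsRepn {S H : Type*} [Monoid S] [NormedAddCommGroup H] [InnerProductSpace ℂ H]
    (π : S → (H →L[ℂ] H)) : Prop :=
  π 1 = 1 ∧ ∀ s t : S, π (s * t) = π s * π t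

/-- `Θ` is the analysis operator of the family `(π s ξ)_{s ∈ S}`:
`Θ x = (⟨x, π s ξ⟩)_{s ∈ S}`. -/
def IsAnalysisOp {S H : Type*} [NormedAddCommGroup H] [InnerProductSpace ℂ H]
    (π : S → (H →L[ℂ] H)) (ξ : H) (Θ : H →L[ℂ] l2 S) : Prop :=
  ∀ (x : H) (s : S), Θ x s = ⟪x, π s ξ⟫

/-- `lam` is the left regular representation of `S` on `ℓ²(S)`: `lam s δ_t = δ_{s*t}`. -/
def IsLeftRegularRepn {S : Type*} [Monoid S] [DecidableEq S]
    (lam : S → (l2 S →L[ℂ] l2 S)) : Prop :=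
  ∀ s t : S, lam s (sdelta t) = sdelta (s * t)

/-- The subspace `M` is co-invariant under `lam`: `Mᗮ` is invariant under every `lam s`. -/
def IsCoinvariant {S : Type*} (lam : S → (l2 S →L[ℂ] l2 S)) (M : Submodule ℂ (l2 S)) : Prop :=
  ∀ s : S, ∀ y ∈ Mᗮ, lam s y ∈ Mᗮ

/-- `M` is co-hyperinvariant under `lam`: `Mᗮ` is invariant under every `lam s` and, in addition,
under every bounded operator commuting with all the `lam s`. -/
def IsCoHyperinvariant {S : Type*} (lam : S → (l2 S →L[ℂ] l2 S))
    (M : Submodule ℂ (l2 S)) : Prop :=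
  IsCoinvariant lam M ∧
    ∀ B : l2 S →L[ℂ] l2 S, (∀ s : S, B * lam s = lam s * B) → ∀ y ∈ Mᗮ, B y ∈ Mᗮ

/-- The representation `π` is central: any two frame vectors are equivalent, i.e. there is a
bounded invertible operator commuting with the representation carrying one to the other. -/
def IsCentral {S H : Type*} [NormedAddCommGroup H] [InnerProductSpace ℂ H]
    (π : S → (H →L[ℂ] H)) : Prop :=
  ∀ ξ η : H, IsFrame (fun s => π s ξ) → IsFrame (fun s => π s η) →
    ∃ T : H ≃L[ℂ] H, (∀ (s : S) (x : H), T (π s x) = π s (T x)) ∧ T ξ = η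

/-- Every frame representation of a countable commutative semigroup
(not necessarily unital or cancellative) on a finite-dimensional complex Hilbert space is
central. -/
theorem statement8 {S H : Type*} [CommSemigroup S] [Countable S]
    [NormedAddCommGroup H] [InnerProductSpace ℂ H] [FiniteDimensional ℂ H]
    (π : S → (H →L[ℂ] H)) (hπ : ∀ s t : S, π (s * t) = π s * π t)
    (hfr : ∃ ξ : H, IsFrame fun s => π s ξ) :
    ∀ ξ η : H, (IsFrame fun s => π s ξ) → (IsFrame fun s => π s η) →
      ∃ T : H ≃L[ℂ] H, (∀ (s : S) (x : H), T (π s x) = π s (T x)) ∧ T ξ = η := by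
  intro ξ η hξ hη
  -- Any frame vector spans H under the semigroup action.
  have spanTop : ∀ ζ : H, (IsFrame fun s => π s ζ) →
      Submodule.span ℂ (Set.range fun s => π s ζ) = ⊤ := by
    rintro ζ ⟨C₁, C₂, hC₁, _, hb⟩
    set M := Submodule.span ℂ (Set.range fun s => π s ζ) with hM
    have horth : Mᗮ = ⊥ := by
      rw [Submodule.eq_bot_iff]
      intro x hx
      have hinner : ∀ s : S, ⟪x, π s ζ⟫ = 0 := by
        intro s
        have h0 : ⟪π s ζ, x⟫ = 0 :=
          hx (π s ζ) (Submodule.subset_span ⟨s, rfl⟩)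
        have := congrArg (starRingEnd ℂ) h0
        simpa [inner_conj_symm] using this
      have hsum : (∑' s, ‖⟪x, π s ζ⟫‖ ^ 2) = 0 := by
        simp [hinner]
      have hle := (hb x).1
      rw [hsum] at hle
      have hx2 : ‖x‖ ^ 2 ≤ 0 := by nlinarith
      have : ‖x‖ = 0 := by nlinarith [norm_nonneg x, sq_nonneg ‖x‖]
      exact norm_eq_zero.mp this
    have : Mᗮᗮ = (⊥ : Submodule ℂ H)ᗮ := by rw [horth]
    rwa [Submodule.orthogonal_orthogonal, Submodule.bot_orthogonal_eq_top] at this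
  -- write η as a finite linear combination of π s ξ
  have hmem : η ∈ Submodule.span ℂ (Set.range fun s => π s ξ) := by
    rw [spanTop ξ hξ]; trivial
  obtain ⟨c, hc⟩ := (Finsupp.mem_span_range_iff_exists_finsupp).mp hmem
  -- the candidate operator
  set T₀ : H →L[ℂ] H := c.sum fun s a => a • π s with hT₀
  have hT₀apply : ∀ x : H, T₀ x = c.sum fun s a => a • π s x := by
    intro x
    simp [hT₀, Finsupp.sum, ContinuousLinearMap.sum_apply]
  have hT₀ξ : T₀ ξ = η := by
    rw [hT₀apply]; exact hc
  have hcomm : ∀ (t : S) (x : H), T₀ (π t x) = π t (T₀ x) := by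
    intro t x
    rw [hT₀apply, hT₀apply, map_finsuppSum]
    refine Finsupp.sum_congr ?_
    intro s _
    have h1 : π s (π t x) = π t (π s x) := by
      have h2 : π s * π t = π t * π s := by
        rw [← hπ s t, ← hπ t s, mul_comm s t]
      have := congrArg (fun A : H →L[ℂ] H => A x) h2
      simpa using this
    rw [map_smul, h1]
  -- T₀ is surjective since its range contains all π s η
  have hsurj : Function.Surjective T₀ := by
    have hrange : Submodule.span ℂ (Set.range fun s => π s η) ≤ LinearMap.range (T₀ : H →ₗ[ℂ] H) := by
      rw [Submodule.span_le]
      rintro _ ⟨s, rfl⟩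
      exact ⟨π s ξ, by rw [ContinuousLinearMap.coe_coe, hcomm, hT₀ξ]⟩
    rw [spanTop η hη] at hrange
    intro y
    obtain ⟨x, hx⟩ := hrange (Submodule.mem_top (x := y))
    exact ⟨x, hx⟩
  have hinj : Function.Injective (T₀ : H →ₗ[ℂ] H) :=
    (LinearMap.injective_iff_surjective).mpr hsurj
  let e : H ≃ₗ[ℂ] H := LinearEquiv.ofBijective (T₀ : H →ₗ[ℂ] H) ⟨hinj, hsurj⟩
  refine ⟨e.toContinuousLinearEquiv, ?_, ?_⟩
  · intro s x
    exact hcomm s x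
  · exact hT₀ξ
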